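/- arXiv:1912.08300 — 2 statements merged into one kernel-verified Lean document; each statement's English description precedes it below -/
import Mathlib

section
/- Let 0 < r < p, p > 1, and f : (0,∞) → [0,∞) nonincreasing with J = ∫₀^∞ f(t)^r t^{r/p-1} dt < ∞. For each integer k let I_k = {t : 2^k < f(t) ≤ 2^{k+1}}. Then J ≤ (p/r) · Σ_k 2^{(k+1)r} |I_k|^{r/p}, where |I_k| denotes the Lebesgue measure of I_k. -/
/-!
On the dyadic level set `I_k` we have `f ^ r ≤ 2 ^ ((k + 1) r)`, so it suffices to bound
`∫_{I_k} t ^ (α - 1)` with `α = r / p ≤ 1`. Since `t ^ (α - 1)` is nonincreasing, among all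
sets of a given measure `m` the initial interval `(0, m)` carries the largest integral (bathtub
principle), and that integral is `m ^ α / α`. Points with `f t = 0` contribute nothing, and all
other points lie in some `I_k`.
-/

open MeasureTheory Set ENNReal

lemma setLIntegral_le_setLIntegral_of_forall_sdiff_eq_zero {α : Type*} [MeasurableSpace α]
    {μ : Measure α} {s t : Set α} (hs : MeasurableSet s) (ht : MeasurableSet t)
    {g : α → ℝ≥0∞} (hg : ∀ x ∈ s \ t, g x = 0) :
    ∫⁻ x in s, g x ∂μ ≤ ∫⁻ x in t, g x ∂μ := by
  rw [← lintegral_inter_add_sdiff g s ht, setLIntegral_eq_zero (hs.diff ht) hg, add_zero]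
  exact lintegral_mono_set inter_subset_right

lemma setLIntegral_le_setLIntegral_Ioo_of_antitoneOn {w : ℝ → ℝ≥0∞}
    (hw : AntitoneOn w (Ioi 0)) {E : Set ℝ} (hE : MeasurableSet E) (hE0 : E ⊆ Ioi 0)
    {m : ℝ} (hm : 0 < m) (hEm : volume E = ENNReal.ofReal m) :
    ∫⁻ t in E, w t ≤ ∫⁻ t in Ioo 0 m, w t := by
  set I := Ioo (0 : ℝ) m
  have hvol : volume (E \ I) = volume (I \ E) :=
    measure_sdiff_symm hE.nullMeasurableSet measurableSet_Ioo.nullMeasurableSet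
      (by rw [hEm, Real.volume_Ioo, sub_zero])
      (measure_ne_top_of_subset inter_subset_left (hEm ▸ ofReal_ne_top))
  have h_out : ∫⁻ t in E \ I, w t ≤ w m * volume (I \ E) := by
    rw [← hvol, ← setLIntegral_const]
    refine setLIntegral_mono' (hE.diff measurableSet_Ioo) fun t ht ↦ hw hm (hE0 ht.1) ?_
    by_contra! htm
    exact ht.2 ⟨hE0 ht.1, htm⟩
  have h_in : w m * volume (I \ E) ≤ ∫⁻ t in I \ E, w t := by
    rw [← setLIntegral_const]
    exact setLIntegral_mono' (measurableSet_Ioo.diff hE) fun t ht ↦ hw ht.1.1 hm ht.1.2.le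
  calc ∫⁻ t in E, w t = (∫⁻ t in E ∩ I, w t) + ∫⁻ t in E \ I, w t :=
        (lintegral_inter_add_sdiff w E measurableSet_Ioo).symm
    _ ≤ (∫⁻ t in I ∩ E, w t) + ∫⁻ t in I \ E, w t := by
        rw [inter_comm E I]
        exact add_le_add_right (h_out.trans h_in) _
    _ = ∫⁻ t in I, w t := lintegral_inter_add_sdiff w I hE

lemma lintegral_Ioo_rpow_sub_one {α : ℝ} (hα : 0 < α) {m : ℝ} (hm : 0 < m) :
    ∫⁻ t in Ioo 0 m, ENNReal.ofReal (t ^ (α - 1)) = ENNReal.ofReal (m ^ α / α) := by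
  have h_int : IntegrableOn (fun t : ℝ ↦ t ^ (α - 1)) (Ioc 0 m) :=
    (intervalIntegral.intervalIntegrable_rpow' (by linarith)).1
  rw [← ofReal_integral_eq_lintegral_ofReal (h_int.mono_set Ioo_subset_Ioc_self)
    (ae_restrict_of_forall_mem measurableSet_Ioo fun t ht ↦ Real.rpow_nonneg ht.1.le _),
    ← integral_Ioc_eq_integral_Ioo, ← intervalIntegral.integral_of_le hm.le,
    integral_rpow (Or.inl (by linarith)), sub_add_cancel, Real.zero_rpow hα.ne', sub_zero]

lemma setLIntegral_rpow_sub_one_le {α : ℝ} (hα0 : 0 < α) (hα1 : α ≤ 1) {E : Set ℝ}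
    (hE : MeasurableSet E) (hE0 : E ⊆ Ioi 0) :
    ∫⁻ t in E, ENNReal.ofReal (t ^ (α - 1)) ≤ ENNReal.ofReal α⁻¹ * volume E ^ α := by
  rcases eq_or_ne (volume E) ⊤ with hE_top | hE_top
  · simp [hE_top, ENNReal.top_rpow_of_pos hα0, hα0]
  rcases eq_or_ne (volume E) 0 with hE_zero | hE_zero
  · simp [setLIntegral_measure_zero _ _ hE_zero]
  have hm : 0 < (volume E).toReal := ENNReal.toReal_pos hE_zero hE_top
  have hw : AntitoneOn (fun t : ℝ ↦ ENNReal.ofReal (t ^ (α - 1))) (Ioi 0) :=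
    fun s hs t _ hst ↦ ENNReal.ofReal_le_ofReal <|
      Real.rpow_le_rpow_of_nonpos hs hst (by linarith)
  calc ∫⁻ t in E, ENNReal.ofReal (t ^ (α - 1))
      ≤ ∫⁻ t in Ioo 0 (volume E).toReal, ENNReal.ofReal (t ^ (α - 1)) :=
        setLIntegral_le_setLIntegral_Ioo_of_antitoneOn hw hE hE0 hm (ofReal_toReal hE_top).symm
    _ = ENNReal.ofReal α⁻¹ * volume E ^ α := by
        rw [lintegral_Ioo_rpow_sub_one hα0 hm, div_eq_inv_mul,
          ENNReal.ofReal_mul (inv_nonneg.2 hα0.le), ← ENNReal.ofReal_rpow_of_pos hm,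
          ofReal_toReal hE_top]

def dyadicLevelSet (f : ℝ → ℝ) (k : ℤ) : Set ℝ :=
  {t ∈ Ioi (0 : ℝ) | (2 : ℝ) ^ k < f t ∧ f t ≤ (2 : ℝ) ^ (k + 1)}

lemma measurableSet_dyadicLevelSet {f : ℝ → ℝ} (hf : AntitoneOn f (Ioi 0)) (k : ℤ) :
    MeasurableSet (dyadicLevelSet f k) := by
  obtain ⟨u, hu, h_eq⟩ :=
    (ordConnected_Ioc : (Ioc ((2 : ℝ) ^ k) (2 ^ (k + 1))).OrdConnected).preimage_antitoneOn hf
  change MeasurableSet (Ioi 0 ∩ f ⁻¹' Ioc _ _)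
  rw [h_eq]
  exact measurableSet_Ioi.inter hu.measurableSet

lemma mem_iUnion_dyadicLevelSet {f : ℝ → ℝ} {t : ℝ} (ht : 0 < t) (hft : 0 < f t) :
    t ∈ ⋃ k, dyadicLevelSet f k := by
  refine mem_iUnion.2 ⟨Int.clog 2 (f t) - 1, ht, ?_, ?_⟩
  · exact_mod_cast Int.zpow_pred_clog_lt_self one_lt_two hft
  · simpa using Int.self_le_zpow_clog one_lt_two (f t)

lemma setLIntegral_dyadicLevelSet_le {p r : ℝ} (hr : 0 < r) (hrp : r ≤ p) {f : ℝ → ℝ}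
    (hf : AntitoneOn f (Ioi 0)) (k : ℤ) :
    ∫⁻ t in dyadicLevelSet f k, ENNReal.ofReal (f t ^ r * t ^ (r / p - 1))
      ≤ ENNReal.ofReal (p / r) * (ENNReal.ofReal ((2 : ℝ) ^ (((k : ℝ) + 1) * r)) *
        volume (dyadicLevelSet f k) ^ (r / p)) := by
  set c := (2 : ℝ) ^ (((k : ℝ) + 1) * r)
  have hf_le : ∀ t ∈ dyadicLevelSet f k, f t ^ r ≤ c := fun t ht ↦ by
    have h2 : ((2 : ℝ) ^ (k + 1)) ^ r = c := by
      rw [← Real.rpow_intCast, ← Real.rpow_mul zero_le_two]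
      push_cast
      rfl
    exact h2 ▸ Real.rpow_le_rpow (((zpow_pos two_pos k).trans ht.2.1).le) ht.2.2 hr.le
  have hp : 0 < p := hr.trans_le hrp
  calc ∫⁻ t in dyadicLevelSet f k, ENNReal.ofReal (f t ^ r * t ^ (r / p - 1))
      ≤ ∫⁻ t in dyadicLevelSet f k, ENNReal.ofReal c * ENNReal.ofReal (t ^ (r / p - 1)) := by
        refine setLIntegral_mono' (measurableSet_dyadicLevelSet hf k) fun t ht ↦ ?_
        rw [← ENNReal.ofReal_mul (by positivity)]
        exact ENNReal.ofReal_le_ofReal <|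
          mul_le_mul_of_nonneg_right (hf_le t ht) (Real.rpow_nonneg ht.1.le _)
    _ = ENNReal.ofReal c * ∫⁻ t in dyadicLevelSet f k, ENNReal.ofReal (t ^ (r / p - 1)) :=
        lintegral_const_mul' _ _ ofReal_ne_top
    _ ≤ ENNReal.ofReal c *
          (ENNReal.ofReal (r / p)⁻¹ * volume (dyadicLevelSet f k) ^ (r / p)) := by
        gcongr
        exact setLIntegral_rpow_sub_one_le (div_pos hr hp) ((div_le_one hp).2 hrp)
          (measurableSet_dyadicLevelSet hf k) fun t ht ↦ ht.1
    _ = _ := by rw [inv_div]; ring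

theorem stmt_1_general (p r : ℝ) (hr : 0 < r) (hrp : r < p)
    (f : ℝ → ℝ) (hf0 : ∀ t, 0 < t → 0 ≤ f t) (hf : AntitoneOn f (Ioi 0)) :
    (∫⁻ t in Ioi (0:ℝ), ENNReal.ofReal (f t ^ r * t ^ (r / p - 1)))
      ≤ ENNReal.ofReal (p / r) *
        ∑' k : ℤ, ENNReal.ofReal ((2:ℝ) ^ (((k:ℝ) + 1) * r)) *
          (volume {t ∈ Ioi (0:ℝ) | (2:ℝ) ^ k < f t ∧ f t ≤ (2:ℝ) ^ (k + 1)}) ^ (r / p) := by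
  have h_vanish : ∀ t ∈ Ioi 0 \ ⋃ k, dyadicLevelSet f k,
      ENNReal.ofReal (f t ^ r * t ^ (r / p - 1)) = 0 := by
    rintro t ⟨ht, ht_notMem⟩
    have hft : f t = 0 :=
      ((hf0 t ht).eq_or_lt.resolve_right fun h ↦ ht_notMem (mem_iUnion_dyadicLevelSet ht h)).symm
    simp [hft, Real.zero_rpow hr.ne']
  calc _ ≤ ∫⁻ t in ⋃ k, dyadicLevelSet f k, ENNReal.ofReal (f t ^ r * t ^ (r / p - 1)) :=
        setLIntegral_le_setLIntegral_of_forall_sdiff_eq_zero measurableSet_Ioi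
          (.iUnion (measurableSet_dyadicLevelSet hf)) h_vanish
    _ ≤ ∑' k, ∫⁻ t in dyadicLevelSet f k, ENNReal.ofReal (f t ^ r * t ^ (r / p - 1)) :=
        lintegral_iUnion_le _ _
    _ ≤ ∑' k : ℤ, ENNReal.ofReal (p / r) *
          (ENNReal.ofReal ((2 : ℝ) ^ (((k : ℝ) + 1) * r)) *
            volume (dyadicLevelSet f k) ^ (r / p)) :=
        ENNReal.tsum_le_tsum fun k ↦ setLIntegral_dyadicLevelSet_le hr hrp.le hf k
    _ = _ := ENNReal.tsum_mul_left

/-- Dyadic level-set estimate (6) for the Lorentz quasinorm. -/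
theorem stmt_1 (p r : ℝ) (hr : 0 < r) (hrp : r < p) (hp : 1 < p)
    (f : ℝ → ℝ) (hf0 : ∀ t, 0 < t → 0 ≤ f t) (hf : AntitoneOn f (Ioi 0))
    (hJ : (∫⁻ t in Ioi (0:ℝ), ENNReal.ofReal (f t ^ r * t ^ (r / p - 1))) < ⊤) :
    (∫⁻ t in Ioi (0:ℝ), ENNReal.ofReal (f t ^ r * t ^ (r / p - 1)))
      ≤ ENNReal.ofReal (p / r) *
        ∑' k : ℤ, ENNReal.ofReal ((2:ℝ) ^ (((k:ℝ) + 1) * r)) *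
          (volume {t ∈ Ioi (0:ℝ) | (2:ℝ) ^ k < f t ∧ f t ≤ (2:ℝ) ^ (k + 1)}) ^ (r / p) :=
  stmt_1_general p r hr hrp f hf0 hf
end

section
/- Let 0 < r < s ≤ ∞ and p > 0. If f : (0,∞) → [0,∞) is nonincreasing and ∫₀^∞ f(t)^r t^{r/p-1} dt < ∞, then ∫₀^∞ f(t)^s t^{s/p-1} dt < ∞ (with the usual modification sup_t f(t) t^{1/p} < ∞ when s = ∞). In particular L(p,r) ⊆ L(p,s) for r < s. -/
/-!
Since `f` is antitone, `f(t)^r t^{r/p} ≤ (r/p) ∫₀ᵗ f(u)^r u^{r/p-1} du`, so `f(t) t^{1/p}` is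
bounded by a constant `C` (the weak-type bound, which is the case `s = ∞`). For finite `s > r`,
`f^s t^{s/p-1} = (f t^{1/p})^{s-r} · f^r t^{r/p-1} ≤ C^{s-r} f^r t^{r/p-1}`.
-/

open MeasureTheory Set ENNReal

theorem lintegral_Ioc_rpow_sub_one {a t : ℝ} (ha : 0 < a) (ht : 0 ≤ t) :
    ∫⁻ u in Ioc 0 t, ENNReal.ofReal (u ^ (a - 1)) = ENNReal.ofReal (t ^ a / a) := by
  have hint : IntegrableOn (fun u : ℝ => u ^ (a - 1)) (Ioc 0 t) :=
    (intervalIntegrable_iff_integrableOn_Ioc_of_le ht).mp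
      (intervalIntegral.intervalIntegrable_rpow' (by linarith))
  rw [← ofReal_integral_eq_lintegral_ofReal hint
    ((ae_restrict_iff' measurableSet_Ioc).2 (ae_of_all _ fun u hu => Real.rpow_nonneg hu.1.le _)),
    ← intervalIntegral.integral_of_le ht, integral_rpow (Or.inl (by linarith)), sub_add_cancel,
    Real.zero_rpow ha.ne', sub_zero]

theorem ofReal_mul_rpow_le_mul_lintegral_of_antitoneOn {g : ℝ → ℝ} {a t : ℝ}
    (hg0 : ∀ u, 0 < u → 0 ≤ g u) (hg : AntitoneOn g (Ioi 0)) (ha : 0 < a) (ht : 0 < t) :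
    ENNReal.ofReal (g t * t ^ a) ≤
      ENNReal.ofReal a * ∫⁻ u in Ioi 0, ENNReal.ofReal (g u * u ^ (a - 1)) := by
  calc ENNReal.ofReal (g t * t ^ a)
      = ENNReal.ofReal a * (ENNReal.ofReal (g t) * ENNReal.ofReal (t ^ a / a)) := by
        rw [← ENNReal.ofReal_mul (hg0 t ht), ← ENNReal.ofReal_mul ha.le]
        congr 1
        field_simp
    _ = ENNReal.ofReal a * ∫⁻ u in Ioc 0 t, ENNReal.ofReal (g t * u ^ (a - 1)) := by
        rw [← lintegral_Ioc_rpow_sub_one ha ht.le, ← lintegral_const_mul' _ _ ofReal_ne_top]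
        simp_rw [ENNReal.ofReal_mul (hg0 t ht)]
    _ ≤ ENNReal.ofReal a * ∫⁻ u in Ioc 0 t, ENNReal.ofReal (g u * u ^ (a - 1)) := by
        gcongr ENNReal.ofReal a * ?_
        refine setLIntegral_mono' measurableSet_Ioc fun u hu => ?_
        exact ENNReal.ofReal_le_ofReal (mul_le_mul_of_nonneg_right
          (hg (mem_Ioi.mpr hu.1) (mem_Ioi.mpr ht) hu.2) (Real.rpow_nonneg hu.1.le _))
    _ ≤ ENNReal.ofReal a * ∫⁻ u in Ioi 0, ENNReal.ofReal (g u * u ^ (a - 1)) := by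
        gcongr
        exact Ioc_subset_Ioi_self

theorem mul_rpow_one_div_le_of_antitoneOn {f : ℝ → ℝ} {p r t : ℝ} (hp : 0 < p) (hr : 0 < r)
    (hf0 : ∀ t, 0 < t → 0 ≤ f t) (hf : AntitoneOn f (Ioi 0))
    (hfin : (∫⁻ t in Ioi (0:ℝ), ENNReal.ofReal (f t ^ r * t ^ (r / p - 1))) < ⊤) (ht : 0 < t) :
    f t * t ^ (1 / p) ≤
      (r / p * (∫⁻ t in Ioi (0:ℝ), ENNReal.ofReal (f t ^ r * t ^ (r / p - 1))).toReal) ^ r⁻¹ := by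
  have hfr0 : ∀ u, 0 < u → 0 ≤ f u ^ r := fun u hu => Real.rpow_nonneg (hf0 u hu) r
  have hfr : AntitoneOn (fun u => f u ^ r) (Ioi 0) := fun u hu v hv huv =>
    Real.rpow_le_rpow (hf0 v hv) (hf hu hv huv) hr.le
  have hweak := ENNReal.toReal_mono (mul_ne_top ofReal_ne_top hfin.ne)
    (ofReal_mul_rpow_le_mul_lintegral_of_antitoneOn hfr0 hfr (div_pos hr hp) ht)
  rw [toReal_mul, toReal_ofReal (div_pos hr hp).le,
    toReal_ofReal (mul_nonneg (hfr0 t ht) (Real.rpow_nonneg ht.le _))] at hweak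
  rw [Real.le_rpow_inv_iff_of_pos (mul_nonneg (hf0 t ht) (Real.rpow_nonneg ht.le _))
    (mul_nonneg (div_pos hr hp).le toReal_nonneg) hr, Real.mul_rpow (hf0 t ht)
    (Real.rpow_nonneg ht.le _), ← Real.rpow_mul ht.le, one_div_mul_eq_div]
  exact hweak

theorem rpow_mul_rpow_eq_mul_rpow_mul {x t : ℝ} (p r s : ℝ) (hx : 0 ≤ x) (ht : 0 < t)
    (hs : s ≠ 0) :
    x ^ s * t ^ (s / p - 1) = (x * t ^ (1 / p)) ^ (s - r) * (x ^ r * t ^ (r / p - 1)) := by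
  rw [Real.mul_rpow hx (Real.rpow_nonneg ht.le _), ← Real.rpow_mul ht.le,
    mul_mul_mul_comm, ← Real.rpow_add' hx (by simpa using hs), ← Real.rpow_add ht]
  ring_nf

theorem lintegral_rpow_le_of_mul_rpow_le {f : ℝ → ℝ} {p r s C : ℝ}
    (hf0 : ∀ t, 0 < t → 0 ≤ f t) (hC : ∀ t, 0 < t → f t * t ^ (1 / p) ≤ C) (hrs : r ≤ s)
    (hs : s ≠ 0) :
    ∫⁻ t in Ioi (0:ℝ), ENNReal.ofReal (f t ^ s * t ^ (s / p - 1)) ≤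
      ENNReal.ofReal (C ^ (s - r)) * ∫⁻ t in Ioi (0:ℝ), ENNReal.ofReal (f t ^ r * t ^ (r / p - 1)) := by
  rw [← lintegral_const_mul' _ _ ofReal_ne_top]
  refine setLIntegral_mono' measurableSet_Ioi fun t ht => ?_
  have hft := hf0 t ht
  have hft_mul : 0 ≤ f t * t ^ (1 / p) := mul_nonneg hft (Real.rpow_nonneg (le_of_lt ht) _)
  rw [rpow_mul_rpow_eq_mul_rpow_mul p r s hft ht hs,
    ← ENNReal.ofReal_mul (Real.rpow_nonneg (hft_mul.trans (hC t ht)) _)]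
  exact ENNReal.ofReal_le_ofReal (mul_le_mul_of_nonneg_right
    (Real.rpow_le_rpow hft_mul (hC t ht) (sub_nonneg.mpr hrs))
    (mul_nonneg (Real.rpow_nonneg hft _) (Real.rpow_nonneg (le_of_lt ht) _)))

/-- Monotonicity of Lorentz spaces in the second index: L(p,r) ⊆ L(p,s) for r < s ≤ ∞. -/
theorem stmt_16 (p r : ℝ) (hp : 0 < p) (hr : 0 < r)
    (f : ℝ → ℝ) (hf0 : ∀ t, 0 < t → 0 ≤ f t) (hf : AntitoneOn f (Ioi 0))
    (hfin : (∫⁻ t in Ioi (0:ℝ), ENNReal.ofReal (f t ^ r * t ^ (r / p - 1))) < ⊤) :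
    (∀ s : ℝ, r < s →
        (∫⁻ t in Ioi (0:ℝ), ENNReal.ofReal (f t ^ s * t ^ (s / p - 1))) < ⊤) ∧
      (⨆ t ∈ Ioi (0:ℝ), ENNReal.ofReal (f t * t ^ (1 / p))) < ⊤ := by
  have hC := fun t (ht : 0 < t) => mul_rpow_one_div_le_of_antitoneOn hp hr hf0 hf hfin ht
  refine ⟨fun s hrs => ?_, ?_⟩
  · exact (lintegral_rpow_le_of_mul_rpow_le hf0 hC hrs.le (hr.trans hrs).ne').trans_lt
      (mul_lt_top ofReal_lt_top hfin)
  · exact (iSup₂_le fun t ht => ENNReal.ofReal_le_ofReal (hC t ht)).trans_lt ofReal_lt_top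
end
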